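/- For all n ≥ 1, 1 ≤ k ≤ n, and complex z with |z| < 1, the integral of ω_n^(k) = z·E_{n-k}(z t_1⋯t_n)/(1 - z t_1⋯t_n)^{n-k+1} dt_1⋯dt_n over [0,1]^n equals Li_k(z). -/

import Mathlib

open MeasureTheory Polynomial

/-- The `n`-th polylogarithm `Li n z = ∑_{k ≥ 1} z^k / k^n`. -/
noncomputable def Li (n : ℕ) (z : ℂ) : ℂ := ∑' k : ℕ, z ^ (k + 1) / ((k : ℂ) + 1) ^ n

/-- The Eulerian polynomials, defined by the recurrence
`E₀ = 1`, `E_{r+1}(x) = x(1-x)E_r'(x) + (1 + r x)E_r(x)`; they satisfy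
`∑_{j≥0} (j+1)^r x^j = E_r(x)/(1-x)^{r+1}`. -/
noncomputable def Eul : ℕ → Polynomial ℚ
  | 0 => 1
  | (r + 1) => X * (1 - X) * derivative (Eul r) + (1 + C (r : ℚ) * X) * Eul r

lemma summable_aux (r : ℕ) {ρ : ℝ} (h : ‖ρ‖ < 1) :
    Summable fun j : ℕ => ((j : ℝ) + 1) ^ r * ρ ^ j := by
  have key : ∀ j : ℕ, ((j : ℝ) + 1) ^ r * ρ ^ j
      = ∑ i ∈ Finset.range (r + 1), ((j : ℝ) ^ i * ρ ^ j * (r.choose i : ℝ)) := by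
    intro j
    rw [add_pow, Finset.sum_mul]
    refine Finset.sum_congr rfl fun i _ => by ring
  simp_rw [key]
  exact summable_sum fun i _ =>
    ((summable_pow_mul_geometric_of_norm_lt_one i h).mul_right _)

lemma summable_auxC (r : ℕ) {x : ℂ} (hx : ‖x‖ < 1) :
    Summable fun j : ℕ => ((j : ℂ) + 1) ^ r * x ^ j := by
  refine Summable.of_norm ?_
  have : ∀ j : ℕ, ‖((j : ℂ) + 1) ^ r * x ^ j‖ = ((j : ℝ) + 1) ^ r * ‖x‖ ^ j := by
    intro j
    rw [norm_mul, norm_pow, norm_pow]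
    congr 2
    rw [show ((j : ℂ) + 1) = ((j + 1 : ℕ) : ℂ) by push_cast; ring, Complex.norm_natCast]
    push_cast; ring
  simp_rw [this]
  exact summable_aux r (by rwa [Real.norm_eq_abs, abs_of_nonneg (norm_nonneg x)])

lemma eul_tsum : ∀ (r : ℕ) (x : ℂ), ‖x‖ < 1 →
    ∑' j : ℕ, ((j : ℂ) + 1) ^ r * x ^ j = aeval x (Eul r) / (1 - x) ^ (r + 1) := by
  intro r
  induction r with
  | zero =>
    intro x hx
    simp only [pow_zero, one_mul, Eul, map_one, pow_one]
    rw [tsum_geometric_of_norm_lt_one hx, one_div, pow_one]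
  | succ r ih =>
    intro x hx
    have hx1 : (1 : ℂ) - x ≠ 0 := by
      intro h
      rw [sub_eq_zero] at h
      rw [← h] at hx; simp at hx
    set ρ : ℝ := (1 + ‖x‖) / 2 with hρdef
    have hρ0 : 0 < ρ := by positivity
    have hρ1 : ρ < 1 := by rw [hρdef]; linarith
    have hxρ : ‖x‖ < ρ := by rw [hρdef]; linarith
    -- the series of derivatives
    set g : ℕ → ℂ → ℂ := fun j y => ((j : ℂ) + 1) ^ r * y ^ j with hg
    set g' : ℕ → ℂ → ℂ := fun j y => ((j : ℂ) + 1) ^ r * ((j : ℂ) * y ^ (j - 1)) with hg'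
    set u : ℕ → ℝ := fun j => ((j : ℝ) + 1) ^ (r + 1) * ρ ^ j / ρ with hu
    have hus : Summable u := (summable_aux (r + 1)
      (by rwa [Real.norm_eq_abs, abs_of_nonneg hρ0.le])).div_const ρ
    have hderiv : ∀ j y, HasDerivAt (g j) (g' j y) y := fun j y =>
      (hasDerivAt_pow j y).const_mul _
    have hbound : ∀ j y, y ∈ Metric.ball (0 : ℂ) ρ → ‖g' j y‖ ≤ u j := by
      intro j y hy
      rw [Metric.mem_ball, dist_zero_right] at hy
      have h1 : ‖g' j y‖ = ((j : ℝ) + 1) ^ r * ((j : ℝ) * ‖y‖ ^ (j - 1)) := by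
        rw [hg']
        simp only [norm_mul, norm_pow]
        rw [show ((j : ℂ) + 1) = ((j + 1 : ℕ) : ℂ) by push_cast; ring, Complex.norm_natCast,
          Complex.norm_natCast]
        push_cast; ring
      rw [h1, hu]
      have hyρ : ‖y‖ ≤ ρ := hy.le
      have h2 : ‖y‖ ^ (j - 1) ≤ ρ ^ j / ρ := by
        cases j with
        | zero => simp only [Nat.zero_sub, pow_zero]
                  rw [le_div_iff₀ hρ0, one_mul]; exact hρ1.le
        | succ m =>
          rw [Nat.succ_sub_one, pow_succ, mul_div_assoc, div_self hρ0.ne', mul_one]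
          exact pow_le_pow_left₀ (norm_nonneg y) hyρ m
      calc ((j : ℝ) + 1) ^ r * ((j : ℝ) * ‖y‖ ^ (j - 1))
          ≤ ((j : ℝ) + 1) ^ r * (((j : ℝ) + 1) * (ρ ^ j / ρ)) := by
            apply mul_le_mul_of_nonneg_left _ (by positivity)
            apply mul_le_mul (by linarith) h2 (by positivity) (by positivity)
        _ = ((j : ℝ) + 1) ^ (r + 1) * ρ ^ j / ρ := by rw [pow_succ]; ring
    have hx0 : x ∈ Metric.ball (0 : ℂ) ρ := by
      rwa [Metric.mem_ball, dist_zero_right]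
    have hsum0 : Summable fun j => g j x := summable_auxC r hx
    have hD : HasDerivAt (fun y => ∑' j, g j y) (∑' j, g' j x) x :=
      hasDerivAt_tsum_of_isPreconnected hus Metric.isOpen_ball
        (convex_ball (0:ℂ) ρ).isPreconnected (fun j y _ => hderiv j y) hbound hx0 hsum0 hx0
    -- identify the derivative with the derivative of the closed form
    set G : ℂ → ℂ := fun y => aeval y (Eul r) / (1 - y) ^ (r + 1) with hG
    have hEq : (fun y => ∑' j, g j y) =ᶠ[nhds x] G := by
      filter_upwards [Metric.ball_mem_nhds x (show (0:ℝ) < 1 - ‖x‖ by linarith)] with y hy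
      rw [Metric.mem_ball] at hy
      have : ‖y‖ < 1 := by
        calc ‖y‖ = ‖(y - x) + x‖ := by ring_nf
          _ ≤ ‖y - x‖ + ‖x‖ := norm_add_le _ _
          _ < (1 - ‖x‖) + ‖x‖ := by
              exact add_lt_add_of_lt_of_le (by rwa [← dist_eq_norm]) le_rfl
          _ = 1 := by ring
      exact ih y this
    have hGd : HasDerivAt G
        ((aeval x (derivative (Eul r)) * (1 - x) ^ (r + 1) -
          aeval x (Eul r) * (((r : ℂ) + 1) * (1 - x) ^ r * (-1))) / ((1 - x) ^ (r + 1)) ^ 2) x := by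
      apply HasDerivAt.div ((Eul r).hasDerivAt_aeval x)
      · have : HasDerivAt (fun y : ℂ => (1 - y) ^ (r + 1))
            (((r : ℂ) + 1) * (1 - x) ^ r * (-1)) x := by
          have h1 : HasDerivAt (fun y : ℂ => 1 - y) (-1) x := by
            simpa using ((hasDerivAt_id x).const_sub 1)
          have := (hasDerivAt_pow (r + 1) (1 - x)).comp x h1
          simp only [Nat.add_sub_cancel, Nat.cast_add, Nat.cast_one] at this
          exact this
        exact this
      · exact pow_ne_zero _ hx1
    have hkey : (∑' j, g' j x) =
        (aeval x (derivative (Eul r)) * (1 - x) ^ (r + 1) -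
          aeval x (Eul r) * (((r : ℂ) + 1) * (1 - x) ^ r * (-1))) / ((1 - x) ^ (r + 1)) ^ 2 :=
      hD.unique (hGd.congr_of_eventuallyEq hEq)
    -- now assemble
    have hsum' : Summable fun j => g' j x :=
      Summable.of_norm_bounded hus fun j => hbound j x hx0
    have hterm : ∀ j : ℕ, ((j : ℂ) + 1) ^ (r + 1) * x ^ j = g j x + x * g' j x := by
      intro j
      rw [hg, hg']
      cases j with
      | zero => simp
      | succ m =>
        simp only [Nat.succ_sub_one]
        push_cast
        ring
    calc ∑' j : ℕ, ((j : ℂ) + 1) ^ (r + 1) * x ^ j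
        = ∑' j : ℕ, (g j x + x * g' j x) := by simp_rw [hterm]
      _ = (∑' j, g j x) + x * (∑' j, g' j x) := by
          rw [Summable.tsum_add hsum0 (hsum'.mul_left x), tsum_mul_left]
      _ = aeval x (Eul (r + 1)) / (1 - x) ^ (r + 1 + 1) := by
          rw [ih x hx, hkey]
          have hE : aeval x (Eul (r + 1)) =
              x * (1 - x) * aeval x (derivative (Eul r)) +
                (1 + (r : ℂ) * x) * aeval x (Eul r) := by
            show aeval x (X * (1 - X) * derivative (Eul r) + (1 + C (r : ℚ) * X) * Eul r) = _
            simp [map_add, map_mul, map_sub, map_one]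
          rw [hE]
          field_simp
          ring

theorem integral_omega_eq_polylog (n k : ℕ) (hn : 1 ≤ n) (hk1 : 1 ≤ k) (hkn : k ≤ n)
    (z : ℂ) (hz : ‖z‖ < 1) :
    (∫ t in Set.Icc (0 : Fin n → ℝ) 1,
        z * Polynomial.aeval (z * ∏ i, (t i : ℂ)) (Eul (n - k)) /
          (1 - z * ∏ i, (t i : ℂ)) ^ (n - k + 1)) = Li k z := by
  set r := n - k with hrdef
  set s : Set (Fin n → ℝ) := Set.Icc 0 1 with hsdef
  have hsm : MeasurableSet s := measurableSet_Icc
  set c : ℕ → ℂ := fun j => ((j : ℂ) + 1) ^ r * z ^ (j + 1) with hc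
  set F : ℕ → (Fin n → ℝ) → ℂ := fun j t => c j * ∏ i, ((t i : ℂ)) ^ j with hF
  have hvol : volume s = 1 := by
    rw [hsdef, Real.volume_Icc_pi]
    simp
  -- pointwise identity on s
  have hpt : ∀ t ∈ s, z * aeval (z * ∏ i, ((t i : ℝ) : ℂ)) (Eul r) /
      (1 - z * ∏ i, ((t i : ℝ) : ℂ)) ^ (r + 1) = ∑' j, F j t := by
    intro t ht
    have htmem : ∀ i, t i ∈ Set.Icc (0 : ℝ) 1 := fun i => ⟨ht.1 i, ht.2 i⟩
    have hprodnorm : ‖∏ i, ((t i : ℝ) : ℂ)‖ ≤ 1 := by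
      rw [norm_prod]
      apply Finset.prod_le_one
      · intro i _; exact norm_nonneg _
      · intro i _
        rw [Complex.norm_real, Real.norm_eq_abs, abs_of_nonneg (htmem i).1]
        exact (htmem i).2
    have hwnorm : ‖z * ∏ i, ((t i : ℝ) : ℂ)‖ < 1 := by
      rw [norm_mul]
      calc ‖z‖ * ‖∏ i, ((t i : ℝ) : ℂ)‖ ≤ ‖z‖ * 1 :=
            mul_le_mul_of_nonneg_left hprodnorm (norm_nonneg z)
        _ = ‖z‖ := mul_one _
        _ < 1 := hz
    rw [mul_div_assoc, ← eul_tsum r _ hwnorm, ← tsum_mul_left]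
    apply tsum_congr
    intro j
    rw [hF, hc]
    simp only []
    rw [mul_pow, ← Finset.prod_pow]
    ring
  rw [setIntegral_congr_fun hsm hpt]
  -- integrability and summability for interchanging
  have hcont : ∀ j : ℕ, Continuous (F j) := by
    intro j
    apply Continuous.mul continuous_const
    apply continuous_finset_prod
    intro i _
    exact (Complex.continuous_ofReal.comp (continuous_apply i)).pow j
  have hint : ∀ j : ℕ, Integrable (F j) (volume.restrict s) :=
    fun j => (hcont j).continuousOn.integrableOn_compact isCompact_Icc
  have hnormle : ∀ j : ℕ, (∫ t in s, ‖F j t‖) ≤ ‖c j‖ := by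
    intro j
    have h1 : ∀ t ∈ s, ‖F j t‖ ≤ ‖c j‖ := by
      intro t ht
      rw [hF]
      simp only []
      rw [norm_mul]
      have : ‖∏ i, ((t i : ℝ) : ℂ) ^ j‖ ≤ 1 := by
        rw [norm_prod]
        apply Finset.prod_le_one
        · intro i _; exact norm_nonneg _
        · intro i _
          rw [norm_pow, Complex.norm_real, Real.norm_eq_abs,
            abs_of_nonneg (ht.1 i)]
          exact pow_le_one₀ (ht.1 i) (ht.2 i)
      calc ‖c j‖ * ‖∏ i, ((t i : ℝ) : ℂ) ^ j‖ ≤ ‖c j‖ * 1 :=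
            mul_le_mul_of_nonneg_left this (norm_nonneg _)
        _ = ‖c j‖ := mul_one _
    calc (∫ t in s, ‖F j t‖) ≤ ∫ _t in s, ‖c j‖ := by
          apply setIntegral_mono_on (hint j).norm (integrableOn_const (lt_top_iff_ne_top.1 ?_)) hsm h1
          rw [hvol]; exact ENNReal.one_lt_top
      _ = ‖c j‖ := by rw [setIntegral_const, measureReal_def, hvol]; simp
  have hcs : Summable fun j : ℕ => ‖c j‖ := by
    have : ∀ j : ℕ, ‖c j‖ = ‖z‖ * (((j : ℝ) + 1) ^ r * ‖z‖ ^ j) := by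
      intro j
      rw [hc]
      simp only []
      rw [norm_mul, norm_pow, norm_pow]
      rw [show ((j : ℂ) + 1) = ((j + 1 : ℕ) : ℂ) by push_cast; ring, Complex.norm_natCast]
      push_cast; ring
    simp_rw [this]
    exact (summable_aux r (by rwa [Real.norm_eq_abs, abs_of_nonneg (norm_nonneg z)])).mul_left _
  have hns : Summable fun j : ℕ => ∫ t in s, ‖F j t‖ :=
    Summable.of_nonneg_of_le (fun j => integral_nonneg fun t => norm_nonneg _) hnormle hcs
  rw [← MeasureTheory.integral_tsum_of_summable_integral_norm hint hns]
  -- compute each integral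
  have hprodint : ∀ j : ℕ, (∫ t in s, ∏ i, ((t i : ℝ) : ℂ) ^ j) = (1 / ((j : ℂ) + 1)) ^ n := by
    intro j
    rw [← integral_indicator hsm]
    have hind : ∀ t : Fin n → ℝ, s.indicator (fun t : Fin n → ℝ => ∏ i, ((t i : ℝ) : ℂ) ^ j) t
        = ∏ i, (Set.Icc (0 : ℝ) 1).indicator (fun a : ℝ => ((a : ℂ)) ^ j) (t i) := by
      intro t
      by_cases h : t ∈ s
      · rw [Set.indicator_of_mem h]
        refine Finset.prod_congr rfl fun i _ => ?_
        rw [Set.indicator_of_mem (show t i ∈ Set.Icc (0:ℝ) 1 from ⟨h.1 i, h.2 i⟩)]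
      · rw [Set.indicator_of_notMem h]
        have : ∃ i, t i ∉ Set.Icc (0 : ℝ) 1 := by
          by_contra hcon
          push_neg at hcon
          simp only [Set.mem_Icc] at hcon
          exact h (Set.mem_Icc.mpr ⟨fun i => (hcon i).1, fun i => (hcon i).2⟩)
        obtain ⟨i, hi⟩ := this
        exact (Finset.prod_eq_zero (Finset.mem_univ i) (Set.indicator_of_notMem hi _)).symm
    simp_rw [hind]
    rw [volume_pi, MeasureTheory.integral_fintype_prod_eq_prod (ι := Fin n)
      (fun _ (a : ℝ) => (Set.Icc (0 : ℝ) 1).indicator (fun a : ℝ => ((a : ℂ)) ^ j) a)]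
    have h1 : (∫ a : ℝ, (Set.Icc (0 : ℝ) 1).indicator (fun a : ℝ => ((a : ℂ)) ^ j) a)
        = 1 / ((j : ℂ) + 1) := by
      rw [integral_indicator measurableSet_Icc]
      have : ∀ a : ℝ, ((a : ℂ)) ^ j = (((a ^ j : ℝ)) : ℂ) := by intro a; push_cast; ring
      simp_rw [this]
      have h2 : (∫ x in Set.Icc (0:ℝ) 1, (((x ^ j : ℝ)) : ℂ)) =
          ((∫ x in Set.Icc (0:ℝ) 1, x ^ j : ℝ) : ℂ) := integral_ofReal
      rw [h2, MeasureTheory.integral_Icc_eq_integral_Ioc,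
        ← intervalIntegral.integral_of_le (zero_le_one (α := ℝ)), integral_pow]
      push_cast
      simp
    rw [Finset.prod_congr rfl fun i _ => h1, Finset.prod_const]
    simp
  have hFint : ∀ j : ℕ, (∫ t in s, F j t) = c j * (1 / ((j : ℂ) + 1)) ^ n := by
    intro j
    rw [hF]
    simp only []
    rw [integral_const_mul, hprodint j]
  rw [tsum_congr hFint]
  -- final summation
  rw [Li]
  apply tsum_congr
  intro j
  have hj : ((j : ℂ) + 1) ≠ 0 := Nat.cast_add_one_ne_zero j
  have hnrk : n = r + k := by omega
  rw [hc]
  simp only []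
  rw [hnrk]
  have hjr : ((j : ℂ) + 1) ^ r ≠ 0 := pow_ne_zero _ hj
  have hjk : ((j : ℂ) + 1) ^ k ≠ 0 := pow_ne_zero _ hj
  field_simp [pow_add]
  rw [div_pow, one_pow, pow_add]
  field_simp
  ring
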